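/- For a nontrivial ring R and a preorder θ on Fin n, the structural matrix ring M_n(θ,R) is a permutation conjugate of the ring of upper triangular matrices if and only if θ is a linear order. -/

import Mathlib

/-!
Conjugating by the permutation matrix of `σ` reindexes a matrix by `σ`, so it carries
`M_n(θ, R)` onto `M_n(θ ∘ (σ × σ), R)`; and since `1 ≠ 0`, the matrix units show that
`M_n(θ, R)` determines `θ`. Hence `M_n(θ, R)` is a permutation conjugate of the upper
triangular matrices exactly when `θ i j ↔ σ i ≤ σ j` for some permutation `σ`, which happens
exactly when `θ` is a linear order, since every linear order on a set of `n` elements is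
isomorphic to `Fin n`.
-/

open Matrix

namespace Matrix

variable {ι R : Type*}

variable (R) in
def structuralMatrices [Zero R] (θ : ι → ι → Prop) : Set (Matrix ι ι R) :=
  {A | ∀ i j, A i j ≠ 0 → θ i j}

theorem permMatrix_mul_mul_permMatrix_inv [Fintype ι] [DecidableEq ι] [NonAssocSemiring R]
    (σ : Equiv.Perm ι) (A : Matrix ι ι R) :
    σ.permMatrix R * A * (σ⁻¹).permMatrix R = A.submatrix σ σ := by
  rw [Equiv.Perm.permMatrix, Equiv.Perm.permMatrix, PEquiv.toMatrix_toPEquiv_mul,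
    PEquiv.mul_toMatrix_toPEquiv]
  rfl

theorem setOf_permMatrix_conj_structuralMatrices [Fintype ι] [DecidableEq ι] [NonAssocSemiring R]
    (θ : ι → ι → Prop) (σ : Equiv.Perm ι) :
    {B : Matrix ι ι R | ∃ A ∈ structuralMatrices R θ,
        B = σ.permMatrix R * A * (σ⁻¹).permMatrix R} =
      structuralMatrices R (fun i j => θ (σ i) (σ j)) := by
  ext B
  simp_rw [permMatrix_mul_mul_permMatrix_inv]
  constructor
  · rintro ⟨A, hA, rfl⟩ i j h
    exact hA _ _ h
  · intro hB
    refine ⟨B.submatrix σ.symm σ.symm, fun i j h => ?_, by simp⟩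
    simpa using hB _ _ h

theorem single_one_mem_structuralMatrices_iff [DecidableEq ι] [Zero R] [One R] [NeZero (1 : R)]
    {θ : ι → ι → Prop} {i j : ι} :
    single i j (1 : R) ∈ structuralMatrices R θ ↔ θ i j := by
  refine ⟨fun h => h i j (by simp), fun h a b hab => ?_⟩
  obtain ⟨rfl, rfl⟩ : i = a ∧ j = b := by
    by_contra hne
    exact hab (single_apply_of_ne _ _ _ _ _ hne)
  exact h

theorem structuralMatrices_injective [Zero R] [One R] [NeZero (1 : R)] :
    Function.Injective (structuralMatrices (ι := ι) R) := by
  classical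
  intro θ ρ h
  ext i j
  rw [← single_one_mem_structuralMatrices_iff (R := R) (θ := θ), h,
    single_one_mem_structuralMatrices_iff]

end Matrix

theorem exists_equiv_fin_rel_iff_le {ι : Type*} [Fintype ι] {θ : ι → ι → Prop}
    (htrans : ∀ i j k, θ i j → θ j k → θ i k) (hanti : ∀ i j, θ i j → θ j i → i = j)
    (htot : ∀ i j, θ i j ∨ θ j i) {n : ℕ} (hn : Fintype.card ι = n) :
    ∃ e : ι ≃ Fin n, ∀ i j, θ i j ↔ e i ≤ e j := by
  let : LinearOrder ι :=
    { le := θ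
      le_refl := fun i => (htot i i).elim id id
      le_trans := htrans
      le_antisymm := hanti
      le_total := htot
      toDecidableLE := Classical.decRel θ }
  exact ⟨(monoEquivOfFin ι hn).symm.toEquiv, fun i j => (monoEquivOfFin ι hn).symm.le_iff_le.symm⟩

theorem structural_matrix_ring_linear_iff_conjugate_upper_general
    (R : Type*) [Ring R] [Nontrivial R] (n : ℕ)
    (θ : Fin n → Fin n → Prop) (ht : Transitive θ) :
    ((∀ i j, θ i j → θ j i → i = j) ∧ (∀ i j, θ i j ∨ θ j i)) ↔
      ∃ σ : Equiv.Perm (Fin n),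
        {A : Matrix (Fin n) (Fin n) R | ∀ i j, A i j ≠ 0 → θ i j} =
          {B : Matrix (Fin n) (Fin n) R |
            ∃ A ∈ {A : Matrix (Fin n) (Fin n) R | ∀ i j, A i j ≠ 0 → i ≤ j},
              B = σ.permMatrix R * A * (σ⁻¹).permMatrix R} := by
  change _ ↔ ∃ σ : Equiv.Perm (Fin n), structuralMatrices R θ =
    {B | ∃ A ∈ structuralMatrices R (· ≤ ·), B = σ.permMatrix R * A * (σ⁻¹).permMatrix R}
  simp_rw [setOf_permMatrix_conj_structuralMatrices, structuralMatrices_injective.eq_iff]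
  constructor
  · rintro ⟨hanti, htot⟩
    obtain ⟨e, he⟩ := exists_equiv_fin_rel_iff_le @ht hanti htot (Fintype.card_fin n)
    exact ⟨e, funext₂ fun i j => propext (he i j)⟩
  · rintro ⟨σ, rfl⟩
    exact ⟨fun i j h h' => σ.injective (le_antisymm h h'), fun i j => le_total _ _⟩

theorem structural_matrix_ring_linear_iff_conjugate_upper
    (R : Type*) [Ring R] [Nontrivial R] (n : ℕ)
    (θ : Fin n → Fin n → Prop) (hr : Reflexive θ) (ht : Transitive θ) :
    ((∀ i j, θ i j → θ j i → i = j) ∧ (∀ i j, θ i j ∨ θ j i)) ↔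
      ∃ σ : Equiv.Perm (Fin n),
        {A : Matrix (Fin n) (Fin n) R | ∀ i j, A i j ≠ 0 → θ i j} =
          {B : Matrix (Fin n) (Fin n) R |
            ∃ A ∈ {A : Matrix (Fin n) (Fin n) R | ∀ i j, A i j ≠ 0 → i ≤ j},
              B = σ.permMatrix R * A * (σ⁻¹).permMatrix R} :=
  structural_matrix_ring_linear_iff_conjugate_upper_general R n θ ht
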